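/- In the push-relabel algorithm with the lexicographic selection rule (all pushes executed with respect to the minimal suitable exchange item), for fixed item e at level ℓ and fixed buyer i, the quantity min{f : f ∈ T_i(e), Θ(f) = ℓ − 1} is monotonically non-decreasing across all push and relabel operations as long as Θ(e) remains ℓ, and it strictly increases at every saturating push at e with respect to f and i. -/

import Mathlib

open Finset

variable {E : Type*} [Fintype E] [DecidableEq E]

/-- Characteristic (unit) vector of an item. -/
def chi (e : E) : E → ℤ := fun f => if f = e then 1 else 0

/-- The integer box `[0, b]_ℤ`. -/
def Box (b : E → ℤ) : Set (E → ℤ) := {z | ∀ e, 0 ≤ z e ∧ z e ≤ b e}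

/-- M-convex set: exchange property. -/
def MConvex (B : Set (E → ℤ)) : Prop :=
  ∀ x ∈ B, ∀ y ∈ B, ∀ e : E, y e < x e →
    ∃ f : E, x f < y f ∧ x - chi e + chi f ∈ B ∧ y + chi e - chi f ∈ B

/-- `ρ` is the rank function of `B`: `ρ S = max {z(S) : z ∈ B}`. -/
def IsRank (B : Set (E → ℤ)) (ρ : Finset E → ℤ) : Prop :=
  ∀ S : Finset E, IsGreatest ((fun z : E → ℤ => ∑ e ∈ S, z e) '' B) (ρ S)

/-- A set `S` is tight for `z` if `z(S) = ρ S`. -/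
def Tight (ρ : Finset E → ℤ) (z : E → ℤ) (S : Finset E) : Prop :=
  ∑ e ∈ S, z e = ρ S

/-- `T` assigns to each item `e` the unique inclusion-wise minimal tight set containing `e`. -/
def MinTightAt (ρ : Finset E → ℤ) (z : E → ℤ) (T : E → Finset E) : Prop :=
  ∀ e, e ∈ T e ∧ Tight ρ z (T e) ∧ ∀ S, e ∈ S → Tight ρ z S → T e ⊆ S

/-- Level invariant (L1): oversold items have level 0. -/
def LevelInv1 {N : Type*} [Fintype N] (b : E → ℤ) (z : N → E → ℤ) (Θ : E → ℤ) : Prop :=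
  ∀ e, b e < ∑ i, z i e → Θ e = 0

/-- Level invariant (L2): `min_{f ∈ T_i(e)} Θ(f) ≥ Θ(e) − 1`. -/
def LevelInv2 {N : Type*} (Θ : E → ℤ) (T : N → E → Finset E) : Prop :=
  ∀ (i : N) (e : E), ∀ f ∈ T i e, Θ e - 1 ≤ Θ f

/-- The candidate for a push at `e` w.r.t. buyer `i`: the minimal item of
`T_i(e)` on level `Θ(e) − 1` (`⊤` if there is none). -/
def pushCand [LinearOrder E] (T : E → Finset E) (Θ : E → ℤ) (e : E) : WithTop E :=
  ((T e).filter (fun f => Θ f = Θ e - 1)).min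

/-!
A set `S` is tight for `z ∈ B` exactly when no exchange `z + χ_u − χ_v` with `u ∈ S`, `v ∉ S`
stays in `B`. Hence unions of tight sets are tight, and `T(e)` consists of `e` and the items `f`
with `z + χ_e − χ_f ∈ B`. A push moves `z` along `χ_k − χ_g` with `g ∈ T(k)`; a tight set that
contains both or neither of `k` and `g` stays tight. Applied to `T(e) ∪ T(k)` if `g ∈ T(e)`, and to
`T(e)` otherwise, this shows that every new candidate for `e` is an old one or an element of
`T(k)` on level `Θ(k) − 1`, which by (L2) and the choice of `g` is at least `g`, itself an old
candidate. After a saturating push at `e = k`, `g` has left `T(k)` and all remaining candidates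
exceed it.
-/

omit [Fintype E] in
@[simp] lemma chi_apply (e f : E) : chi e f = if f = e then 1 else 0 := rfl

omit [Fintype E] in
lemma sum_chi (S : Finset E) (u : E) : ∑ x ∈ S, chi u x = if u ∈ S then 1 else 0 :=
  Finset.sum_ite_eq' S u fun _ => 1

omit [Fintype E] in
lemma sum_add_smul_chi_sub_chi (S : Finset E) (z : E → ℤ) (a : ℤ) (u v : E) :
    ∑ x ∈ S, (z + a • (chi u - chi v)) x
      = ∑ x ∈ S, z x + a * ((if u ∈ S then 1 else 0) - if v ∈ S then 1 else 0) := by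
  simp only [Pi.add_apply, Pi.smul_apply, Pi.sub_apply, smul_eq_mul, sum_add_distrib,
    ← mul_sum, sum_sub_distrib, sum_chi]

omit [Fintype E] in
lemma sum_add_chi_sub_chi (S : Finset E) (z : E → ℤ) (u v : E) :
    ∑ x ∈ S, (z + chi u - chi v) x
      = ∑ x ∈ S, z x + (if u ∈ S then 1 else 0) - if v ∈ S then 1 else 0 := by
  rw [add_sub_assoc, ← one_smul ℤ (chi u - chi v), sum_add_smul_chi_sub_chi, one_mul,
    add_sub_assoc]

section MConvex

variable {B : Set (E → ℤ)}

omit [Fintype E] in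
lemma MConvex.exchange_trans (hM : MConvex B) {z : E → ℤ} (hz : z ∈ B) {e u v : E}
    (heu : z + chi e - chi u ∈ B) (huv : z + chi u - chi v ∈ B) : z + chi e - chi v ∈ B := by
  by_cases heu' : e = u
  · exact heu' ▸ huv
  by_cases huv' : u = v
  · exact huv' ▸ heu
  by_cases hev : e = v
  · simpa [hev] using hz
  -- exchanging `u` between the two points can only bring back `e` or `v`
  have hu : (z + chi e - chi u) u < (z + chi u - chi v) u := by simp [huv', Ne.symm heu']
  obtain ⟨x, hx, hxe, hxv⟩ := hM _ huv _ heu u hu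
  by_cases hx_e : x = e
  · subst hx_e
    convert hxe using 1
    abel
  by_cases hx_v : x = v
  · subst hx_v
    convert hxv using 1
    abel
  rcases eq_or_ne x u with rfl | hxu
  · simp [huv', Ne.symm heu'] at hx; omega
  · simp [hx_e, hx_v, hxu] at hx

lemma MConvex.sum_le_of_forall_exchange_not_mem (hM : MConvex B) {z : E → ℤ} (hz : z ∈ B)
    {S : Finset E} (hS : ∀ u ∈ S, ∀ v ∉ S, z + chi u - chi v ∉ B) {y : E → ℤ} (hy : y ∈ B) :
    ∑ x ∈ S, y x ≤ ∑ x ∈ S, z x := by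
  induction hd : ∑ x, (y x - z x).natAbs using Nat.strong_induction_on generalizing y with
  | _ d ih =>
  by_cases hle : ∀ u ∈ S, y u ≤ z u
  · exact sum_le_sum hle
  push Not at hle
  obtain ⟨u, huS, hu⟩ := hle
  obtain ⟨v, hv, hy', hzuv⟩ := hM y hy z hz u hu
  have hvu : v ≠ u := by rintro rfl; omega
  have hvS : v ∈ S := by_contra fun hvS => hS u huS v hvS hzuv
  -- the exchange `y - χ_u + χ_v` keeps `y(S)` and moves `y` closer to `z`
  have hcloser : ∑ x, ((y - chi u + chi v) x - z x).natAbs < d := by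
    rw [← hd]
    refine sum_lt_sum (fun x _ => ?_) ⟨u, mem_univ u, ?_⟩
    · rcases eq_or_ne x u with rfl | hxu
      · simp [hvu.symm]; omega
      rcases eq_or_ne x v with rfl | hxv
      · simp [hxu]; omega
      · simp [hxu, hxv]
    · simp [hvu.symm]; omega
  calc ∑ x ∈ S, y x = ∑ x ∈ S, (y - chi u + chi v) x := by
        rw [sub_add_eq_add_sub, sum_add_chi_sub_chi, if_pos huS, if_pos hvS]; ring
    _ ≤ ∑ x ∈ S, z x := ih _ hcloser hy' rfl

end MConvex

section Tight

variable {B : Set (E → ℤ)} {ρ : Finset E → ℤ} {z : E → ℤ}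

lemma IsRank.tight_iff (hρ : IsRank B ρ) (hM : MConvex B) (hz : z ∈ B) {S : Finset E} :
    Tight ρ z S ↔ ∀ u ∈ S, ∀ v ∉ S, z + chi u - chi v ∉ B := by
  constructor
  · intro hS u hu v hv huv
    have := (hρ S).2 ⟨_, huv, rfl⟩
    simp only [sum_add_chi_sub_chi, if_pos hu, if_neg hv] at this
    unfold Tight at hS
    omega
  · intro hS
    obtain ⟨⟨y, hy, hyS⟩, hmax⟩ := hρ S
    exact le_antisymm (hmax ⟨z, hz, rfl⟩) (hyS ▸ hM.sum_le_of_forall_exchange_not_mem hz hS hy)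

lemma Tight.union (hρ : IsRank B ρ) (hM : MConvex B) (hz : z ∈ B) {S S' : Finset E}
    (hS : Tight ρ z S) (hS' : Tight ρ z S') : Tight ρ z (S ∪ S') := by
  rw [hρ.tight_iff hM hz] at hS hS' ⊢
  intro u hu v hv
  rw [mem_union, not_or] at hv
  rcases mem_union.1 hu with hu | hu
  exacts [hS u hu v hv.1, hS' u hu v hv.2]

omit [Fintype E] in
lemma Tight.add_smul_chi_sub_chi {S : Finset E} (hS : Tight ρ z S) {k g : E}
    (hkg : k ∈ S ↔ g ∈ S) (a : ℤ) : Tight ρ (z + a • (chi k - chi g)) S := by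
  unfold Tight at hS ⊢
  simp only [sum_add_smul_chi_sub_chi, hkg, sub_self, mul_zero, add_zero, hS]

omit [Fintype E] [DecidableEq E] in
lemma MinTightAt.eq {T T' : E → Finset E} (hT : MinTightAt ρ z T) (hT' : MinTightAt ρ z T') :
    T = T' := by
  funext e
  exact ((hT e).2.2 _ (hT' e).1 (hT' e).2.1).antisymm ((hT' e).2.2 _ (hT e).1 (hT e).2.1)

lemma MinTightAt.exchange_mem (hρ : IsRank B ρ) (hM : MConvex B) (hz : z ∈ B)
    {T : E → Finset E} (hT : MinTightAt ρ z T) {e f : E} (hf : f ∈ T e) (hfe : f ≠ e) :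
    z + chi e - chi f ∈ B := by
  classical
  let D : Finset E := univ.filter fun v => v = e ∨ z + chi e - chi v ∈ B
  have hD : Tight ρ z D := by
    refine (hρ.tight_iff hM hz).2 fun u hu v hv huv => hv ?_
    simp only [D, mem_filter, mem_univ, true_and] at hu ⊢
    rcases hu with rfl | heu
    exacts [Or.inr huv, Or.inr (hM.exchange_trans hz heu huv)]
  have hfD := (hT e).2.2 D (by simp [D]) hD hf
  simpa [D, hfe] using hfD

lemma MinTightAt.mem_or_of_push (hρ : IsRank B ρ) (hM : MConvex B) (hz : z ∈ B)
    {T T' : E → Finset E} (hT : MinTightAt ρ z T) {k g : E} (hgk : g ∈ T k) {a : ℤ}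
    (hT' : MinTightAt ρ (z + a • (chi k - chi g)) T') {e f : E} (hf : f ∈ T' e) :
    f ∈ T e ∨ g ∈ T e ∧ f ∈ T k := by
  by_cases hge : g ∈ T e
  · have hU : Tight ρ z (T e ∪ T k) := (hT e).2.1.union hρ hM hz (hT k).2.1
    have hsub := (hT' e).2.2 _ (mem_union_left _ (hT e).1)
      (hU.add_smul_chi_sub_chi (by simp [(hT k).1, hgk]) a) hf
    rcases mem_union.1 hsub with h | h
    exacts [Or.inl h, Or.inr ⟨hge, h⟩]
  · have hke : k ∉ T e := fun hke => hge ((hT k).2.2 _ hke (hT e).2.1 hgk)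
    exact Or.inl ((hT' e).2.2 _ (hT e).1
      ((hT e).2.1.add_smul_chi_sub_chi (iff_of_false hke hge) a) hf)

end Tight

section PushCand

variable [LinearOrder E] {T T' : E → Finset E} {Θ : E → ℤ}

omit [Fintype E] [DecidableEq E] in
lemma pushCand_le {e f : E} (hf : f ∈ T e) (hΘf : Θ f = Θ e - 1) : pushCand T Θ e ≤ f :=
  Finset.min_le (mem_filter.2 ⟨hf, hΘf⟩)

omit [Fintype E] [DecidableEq E] in
lemma coe_lt_pushCand {e g : E} (h : ∀ f ∈ T e, Θ f = Θ e - 1 → g < f) :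
    (g : WithTop E) < pushCand T Θ e := by
  unfold pushCand
  rcases (T e |>.filter fun f => Θ f = Θ e - 1).eq_empty_or_nonempty with hs | hs
  · rw [hs, Finset.min_empty]
    exact WithTop.coe_lt_top g
  · obtain ⟨m, hm⟩ := Finset.min_of_nonempty hs
    have hmem := mem_filter.1 (Finset.mem_of_min hm)
    rw [hm]
    exact WithTop.coe_lt_coe.2 (h m hmem.1 hmem.2)

omit [Fintype E] in
lemma pushCand_le_pushCand_update {e g : E} (hge : g ≠ e) (hL2 : ∀ f ∈ T e, Θ e - 1 ≤ Θ f) :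
    pushCand T Θ e ≤ pushCand T (Function.update Θ g (Θ g + 1)) e := by
  refine Finset.min_mono fun f hf => ?_
  obtain ⟨hfT, hfΘ⟩ := mem_filter.1 hf
  rw [Function.update_of_ne hge.symm] at hfΘ
  refine mem_filter.2 ⟨hfT, ?_⟩
  rcases eq_or_ne f g with rfl | hfg
  · have := hL2 f hfT
    rw [Function.update_self] at hfΘ
    omega
  · rwa [Function.update_of_ne hfg] at hfΘ

variable {B : Set (E → ℤ)} {ρ : Finset E → ℤ} {z : E → ℤ} {k g : E} {a : ℤ}

lemma pushCand_le_pushCand_of_push (hρ : IsRank B ρ) (hM : MConvex B) (hz : z ∈ B)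
    (hT : MinTightAt ρ z T) (hT' : MinTightAt ρ (z + a • (chi k - chi g)) T')
    (hL2 : ∀ e, ∀ f ∈ T e, Θ e - 1 ≤ Θ f) (hgk : g ∈ T k) (hΘg : Θ g = Θ k - 1)
    (hgmin : ∀ f ∈ T k, Θ f = Θ k - 1 → g ≤ f) (e : E) :
    pushCand T Θ e ≤ pushCand T' Θ e := by
  refine Finset.le_min fun f hf => ?_
  obtain ⟨hfT', hΘf⟩ := mem_filter.1 hf
  rcases hT.mem_or_of_push hρ hM hz hgk hT' hfT' with hfT | ⟨hge, hfk⟩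
  · exact pushCand_le hfT hΘf
  · have := hL2 e g hge
    have := hL2 k f hfk
    calc pushCand T Θ e ≤ g := pushCand_le hge (by omega)
      _ ≤ f := WithTop.coe_le_coe.2 (hgmin f hfk (by omega))

lemma pushCand_lt_pushCand_of_push (hρ : IsRank B ρ) (hM : MConvex B) (hz : z ∈ B)
    (hT : MinTightAt ρ z T) (hz' : z + a • (chi k - chi g) ∈ B)
    (hT' : MinTightAt ρ (z + a • (chi k - chi g)) T') (hgk : g ∈ T k) (hΘg : Θ g = Θ k - 1)
    (hgmin : ∀ f ∈ T k, Θ f = Θ k - 1 → g ≤ f) (hsat : z + (a + 1) • (chi k - chi g) ∉ B) :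
    pushCand T Θ k < pushCand T' Θ k := by
  have hkg : k ≠ g := by rintro rfl; omega
  have hgT' : g ∉ T' k := fun hg => hsat <| by
    convert hT'.exchange_mem hρ hM hz' hg hkg.symm using 1
    rw [add_smul, one_smul]
    abel
  refine (pushCand_le hgk hΘg).trans_lt (coe_lt_pushCand fun f hf hΘf => ?_)
  have hfk : f ∈ T k := by
    rcases hT.mem_or_of_push hρ hM hz hgk hT' hf with h | h
    exacts [h, h.2]
  exact (hgmin f hfk hΘf).lt_of_ne (by rintro rfl; exact hgT' hf)

end PushCand

theorem stmt11_general {N : Type*} [Fintype N] [DecidableEq N] [LinearOrder E]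
    (b : E → ℤ) (B : N → Set (E → ℤ))
    (hM : ∀ i, MConvex (B i))
    (ρ : N → Finset E → ℤ) (hρ : ∀ i, IsRank (B i) (ρ i))
    (z : N → E → ℤ) (hz : ∀ i, z i ∈ B i)
    (Θ : E → ℤ)
    (T : N → E → Finset E) (hT : ∀ i, MinTightAt (ρ i) (z i) (T i))
    (h2 : LevelInv2 Θ T)
    (e : E) (i : N) :
    -- a relabel operation at an item `g ≠ e` does not decrease the candidate
    (∀ g : E, g ≠ e → (∑ j, z j g) < b g → Θ g < Fintype.card E →
      (∀ (j : N) (f : E), f ∈ T j g → Θ f ≠ Θ g - 1) →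
      pushCand (T i) Θ e ≤
        pushCand (T i) (Function.update Θ g (Θ g + 1)) e) ∧
    -- a push at `k` w.r.t. buyer `j` and the minimal suitable item `g`
    (∀ (k g : E) (j : N) (w : ℤ),
      g ∈ T j k → Θ g = Θ k - 1 →
      (∀ g' ∈ T j k, Θ g' = Θ k - 1 → g ≤ g') →
      (∑ l, z l k) < b k →
      IsGreatest {α : ℤ | z j - α • chi g + α • chi k ∈ B j} w →
      ∀ z' : N → E → ℤ,
        z' = Function.update z j
          (z j - (min (b k - ∑ l, z l k) w) • chi g
               + (min (b k - ∑ l, z l k) w) • chi k) →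
      ∀ T' : N → E → Finset E, (∀ l, MinTightAt (ρ l) (z' l) (T' l)) →
        pushCand (T i) Θ e ≤ pushCand (T' i) Θ e ∧
        (k = e → j = i → min (b k - ∑ l, z l k) w = w →
          pushCand (T i) Θ e < pushCand (T' i) Θ e)) := by
  refine ⟨fun g hge _ _ _ => pushCand_le_pushCand_update hge (h2 i e), ?_⟩
  rintro k g j w hgk hΘg hgmin - ⟨hwB, hwmax⟩ z' rfl T' hT'
  set a := min (b k - ∑ l, z l k) w
  have hdir (c : ℤ) : z j - c • chi g + c • chi k = z j + c • (chi k - chi g) := by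
    rw [smul_sub]; abel
  rcases eq_or_ne j i with rfl | hji
  · have hT'j : MinTightAt (ρ j) (z j + a • (chi k - chi g)) (T' j) := by
      simpa only [Function.update_self, hdir] using hT' j
    refine ⟨pushCand_le_pushCand_of_push (hρ j) (hM j) (hz j) (hT j) hT'j (h2 j) hgk hΘg hgmin e,
      fun hke _ hsat => ?_⟩
    subst hke
    rw [hsat] at hT'j
    refine pushCand_lt_pushCand_of_push (hρ j) (hM j) (hz j) (hT j) (hdir w ▸ hwB) hT'j hgk hΘg
      hgmin fun hmem => ?_
    have := @hwmax (w + 1) (by rwa [Set.mem_ofPred_eq, hdir])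
    omega
  · have hT'i : T' i = T i := by
      refine (hT' i).eq ?_
      rw [Function.update_of_ne hji.symm]
      exact hT i
    exact ⟨hT'i ▸ le_rfl, fun _ hji' => absurd hji' hji⟩

/-- Lexicographic monotonicity: for a fixed item `e` and buyer `i`, the minimal
candidate item `min {f ∈ T_i(e) : Θ(f) = Θ(e) − 1}` does not decrease under relabel
operations at other items nor under pushes executed w.r.t. the minimal suitable
item, and it strictly increases at every saturating push at `e` w.r.t. `i`. -/
theorem stmt11 {N : Type*} [Fintype N] [DecidableEq N] [LinearOrder E]
    (b : E → ℤ) (B : N → Set (E → ℤ))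
    (hBox : ∀ i, B i ⊆ Box b) (hM : ∀ i, MConvex (B i))
    (ρ : N → Finset E → ℤ) (hρ : ∀ i, IsRank (B i) (ρ i))
    (z : N → E → ℤ) (hz : ∀ i, z i ∈ B i)
    (Θ : E → ℤ) (hΘ : ∀ e, 0 ≤ Θ e ∧ Θ e ≤ Fintype.card E)
    (T : N → E → Finset E) (hT : ∀ i, MinTightAt (ρ i) (z i) (T i))
    (h1 : LevelInv1 b z Θ) (h2 : LevelInv2 Θ T)
    (e : E) (i : N) :
    -- a relabel operation at an item `g ≠ e` does not decrease the candidate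
    (∀ g : E, g ≠ e → (∑ j, z j g) < b g → Θ g < Fintype.card E →
      (∀ (j : N) (f : E), f ∈ T j g → Θ f ≠ Θ g - 1) →
      pushCand (T i) Θ e ≤
        pushCand (T i) (Function.update Θ g (Θ g + 1)) e) ∧
    -- a push at `k` w.r.t. buyer `j` and the minimal suitable item `g`
    (∀ (k g : E) (j : N) (w : ℤ),
      g ∈ T j k → Θ g = Θ k - 1 →
      (∀ g' ∈ T j k, Θ g' = Θ k - 1 → g ≤ g') →
      (∑ l, z l k) < b k →
      IsGreatest {α : ℤ | z j - α • chi g + α • chi k ∈ B j} w →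
      ∀ z' : N → E → ℤ,
        z' = Function.update z j
          (z j - (min (b k - ∑ l, z l k) w) • chi g
               + (min (b k - ∑ l, z l k) w) • chi k) →
      ∀ T' : N → E → Finset E, (∀ l, MinTightAt (ρ l) (z' l) (T' l)) →
        pushCand (T i) Θ e ≤ pushCand (T' i) Θ e ∧
        (k = e → j = i → min (b k - ∑ l, z l k) w = w →
          pushCand (T i) Θ e < pushCand (T' i) Θ e)) :=
  stmt11_general b B hM ρ hρ z hz Θ T hT h2 e i
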